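/- arXiv:2201.12923 — 4 statements merged into one kernel-verified Lean document; each statement's English description precedes it below -/
import Mathlib

section
/- Consider a 1-dimensional system with a finite set of agents V, positions x : V → ℝ, and a finite symmetric influence edge set E_I ⊆ V × V (each agent's influencing neighborhood N(v) consists of v and its E_I-neighbors). Fix c ∈ ℝ and partition V into V_ℓ = {v : x_v ≤ c} and V_r = V \ V_ℓ, and let E_{ℓ,r} be the set of influence edges with one endpoint in V_ℓ and one in V_r. Define m(v) = (∑_{u ∈ N(v)} (x_u - x_v)) / |N(v)|. Then ∑_{v ∈ V} |N(v)|·|m(v)| ≥ 2·∑_{{u,w} ∈ E_{ℓ,r}} |x_u - x_w|. -/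
/-- In a 1-dimensional system with influence graph `G`, cutting the
agents at threshold `c` into `V_ℓ = {v | x v ≤ c}` and `V_r = {v | ¬ x v ≤ c}`, the
total weighted movement `∑_v |N(v)|·|m(v)|`, where `N(v) = {v} ∪ neighbors of v` and
`m(v) = (∑_{u ∈ N(v)} (x u − x v))/|N(v)|`, is at least twice the total length of
the crossing influence edges. -/
theorem summed_movement_ge_crossing_edges
    {V : Type*} [Fintype V] [DecidableEq V]
    (G : SimpleGraph V) [DecidableRel G.Adj] (x : V → ℝ) (c : ℝ) :
    let N : V → Finset V := fun v => insert v (G.neighborFinset v)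
    let m : V → ℝ := fun v => (∑ u ∈ N v, (x u - x v)) / ((N v).card : ℝ)
    let Vl : Finset V := Finset.univ.filter (fun v => x v ≤ c)
    let Vr : Finset V := Finset.univ.filter (fun v => ¬ x v ≤ c)
    ∑ v, ((N v).card : ℝ) * |m v| ≥
      2 * ∑ u ∈ Vl, ∑ w ∈ Vr, (if G.Adj u w then |x u - x w| else 0) := by
  intro N m Vl Vr
  set S : V → ℝ := fun v => ∑ u ∈ N v, (x u - x v) with hSdef
  have hcard : ∀ v, (0:ℝ) < ((N v).card : ℝ) := by
    intro v
    have : v ∈ N v := Finset.mem_insert_self _ _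
    exact_mod_cast Finset.card_pos.mpr ⟨v, this⟩
  have hNm : ∀ v, ((N v).card : ℝ) * |m v| = |S v| := by
    intro v
    have h := hcard v
    have hm : m v = S v / ((N v).card : ℝ) := rfl
    rw [hm, abs_div, abs_of_pos h, mul_div_cancel₀ _ (ne_of_gt h)]
  have hSform : ∀ v, S v = ∑ u, (if G.Adj v u then x u - x v else 0) := by
    intro v
    have hv : v ∉ G.neighborFinset v := by simp
    show ∑ u ∈ insert v (G.neighborFinset v), (x u - x v) = _
    rw [Finset.sum_insert hv, sub_self, zero_add,
      SimpleGraph.neighborFinset_eq_filter, Finset.sum_filter]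
  have key : ∀ v u, (if G.Adj u v then x v - x u else 0)
      = -(if G.Adj v u then x u - x v else 0) := by
    intro v u
    by_cases h : G.Adj v u
    · rw [if_pos h, if_pos h.symm]; ring
    · rw [if_neg h, if_neg (fun h' => h h'.symm), neg_zero]
  have hanti : ∀ A : Finset V,
      ∑ v ∈ A, ∑ u ∈ A, (if G.Adj v u then x u - x v else 0) = 0 := by
    intro A
    have h : ∑ v ∈ A, ∑ u ∈ A, (if G.Adj v u then x u - x v else 0)
        = - ∑ v ∈ A, ∑ u ∈ A, (if G.Adj v u then x u - x v else 0) := by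
      calc ∑ v ∈ A, ∑ u ∈ A, (if G.Adj v u then x u - x v else 0)
          = ∑ u ∈ A, ∑ v ∈ A, (if G.Adj v u then x u - x v else 0) := Finset.sum_comm
        _ = ∑ u ∈ A, ∑ v ∈ A, -(if G.Adj u v then x v - x u else 0) :=
            Finset.sum_congr rfl fun u _ => Finset.sum_congr rfl fun v _ => (key u v).symm ▸ rfl
        _ = - ∑ u ∈ A, ∑ v ∈ A, (if G.Adj u v then x v - x u else 0) := by
            simp [Finset.sum_neg_distrib]
    linarith
  have hsplit : ∀ v, S v
      = (∑ u ∈ Vl, (if G.Adj v u then x u - x v else 0))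
        + ∑ u ∈ Vr, (if G.Adj v u then x u - x v else 0) := by
    intro v
    rw [hSform v, ← Finset.sum_filter_add_sum_filter_not Finset.univ (fun u => x u ≤ c)]
  set C : ℝ := ∑ u ∈ Vl, ∑ w ∈ Vr, (if G.Adj u w then |x u - x w| else 0) with hC
  have hcross : ∀ u ∈ Vl, ∀ w ∈ Vr, (if G.Adj u w then |x u - x w| else 0)
      = (if G.Adj u w then x w - x u else 0) := by
    intro u hu w hw
    have hu' : x u ≤ c := (Finset.mem_filter.mp hu).2
    have hw' : ¬ x w ≤ c := (Finset.mem_filter.mp hw).2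
    by_cases h : G.Adj u w
    · rw [if_pos h, if_pos h, abs_of_nonpos (by linarith), neg_sub]
    · simp [h]
  have h1 : ∑ v ∈ Vl, S v = C := by
    rw [Finset.sum_congr rfl (fun v _ => hsplit v), Finset.sum_add_distrib, hanti Vl,
      zero_add, hC]
    exact Finset.sum_congr rfl fun u hu =>
      Finset.sum_congr rfl fun w hw => ((hcross u hu w hw).symm)
  have h2 : ∑ v ∈ Vr, S v = -C := by
    have : ∑ v ∈ Vr, S v
        = ∑ v ∈ Vr, ∑ u ∈ Vl, (if G.Adj v u then x u - x v else 0) := by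
      rw [Finset.sum_congr rfl (fun v _ => hsplit v), Finset.sum_add_distrib, hanti Vr,
        add_zero]
    rw [this, Finset.sum_comm, hC, ← Finset.sum_neg_distrib]
    refine Finset.sum_congr rfl fun u hu => ?_
    rw [← Finset.sum_neg_distrib]
    refine Finset.sum_congr rfl fun w hw => ?_
    rw [hcross u hu w hw, key]
  have habs : ∑ v, |S v| ≥ 2 * C := by
    have hsp : ∑ v, |S v| = ∑ v ∈ Vl, |S v| + ∑ v ∈ Vr, |S v| :=
      (Finset.sum_filter_add_sum_filter_not Finset.univ (fun v => x v ≤ c) _).symm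
    have hl : ∑ v ∈ Vl, |S v| ≥ ∑ v ∈ Vl, S v :=
      Finset.sum_le_sum fun v _ => le_abs_self _
    have hr : ∑ v ∈ Vr, |S v| ≥ ∑ v ∈ Vr, -S v :=
      Finset.sum_le_sum fun v _ => neg_le_abs _
    have hr' : ∑ v ∈ Vr, -S v = -∑ v ∈ Vr, S v := by rw [Finset.sum_neg_distrib]
    rw [hsp]
    have := h1; have := h2
    nlinarith [hl, hr, hr', h1, h2]
  calc ∑ v, ((N v).card : ℝ) * |m v| = ∑ v, |S v| :=
        Finset.sum_congr rfl fun v _ => hNm v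
    _ ≥ 2 * C := habs
end

section
/- In a 1-dimensional system with finite agent set V, positions x : V → ℝ, influence edges E_I, and movements m(v) = (∑_{u ∈ N(v)} (x_u - x_v)) / |N(v)|, the total weighted movement satisfies ∑_{v ∈ V} |N(v)|·|m(v)| ≥ 2λ, where λ is the length |x_u - x_w| of a longest edge {u,w} ∈ E_I. -/
/-!
Cut the line at `x u`: let `L` be the agents at or to the left of `x u`. Summed over `L`, the
displacements along edges inside `L` cancel, so the sum only sees edges leaving `L`, all of
which point to the right, and the edge `u w` alone contributes `x w - x u`. The displacements
sum to zero over all of `V`, so the agents outside `L` carry the same amount with the opposite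
sign, and the triangle inequality on both sides gives `2 (x w - x u)`.
-/

open Finset

namespace SimpleGraph

variable {V : Type*} [Fintype V] [DecidableEq V] (G : SimpleGraph V) [DecidableRel G.Adj]
  (x : V → ℝ)

/-- `|N(v)| * m(v)`; the term `t = v` of the paper's sum vanishes. -/
def displacement (v : V) : ℝ :=
  ∑ t ∈ G.neighborFinset v, (x t - x v)

theorem sum_sum_neighborFinset_filter_mem_eq_zero (L : Finset V) :
    ∑ v ∈ L, ∑ t ∈ G.neighborFinset v with t ∈ L, (x t - x v) = 0 := by
  have hswap : ∑ v ∈ L, ∑ t ∈ G.neighborFinset v with t ∈ L, (x t - x v)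
      = ∑ t ∈ L, ∑ v ∈ G.neighborFinset t with v ∈ L, (x t - x v) :=
    Finset.sum_comm' fun v t => by
      simp only [mem_filter, mem_neighborFinset, G.adj_comm v t]
      tauto
  have hneg : ∑ t ∈ L, ∑ v ∈ G.neighborFinset t with v ∈ L, (x t - x v)
      = -∑ v ∈ L, ∑ t ∈ G.neighborFinset v with t ∈ L, (x t - x v) := by
    simp only [← sum_neg_distrib, neg_sub]
  linarith

theorem sum_displacement_eq_sum_boundary (L : Finset V) :
    ∑ v ∈ L, G.displacement x v = ∑ v ∈ L, ∑ t ∈ G.neighborFinset v with t ∉ L, (x t - x v) := by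
  have hsplit : ∀ v, G.displacement x v = ∑ t ∈ G.neighborFinset v with t ∈ L, (x t - x v)
      + ∑ t ∈ G.neighborFinset v with t ∉ L, (x t - x v) := fun v =>
    (sum_filter_add_sum_filter_not _ _ _).symm
  rw [sum_congr rfl fun v _ => hsplit v, sum_add_distrib,
    sum_sum_neighborFinset_filter_mem_eq_zero, zero_add]

theorem sum_displacement_eq_zero : ∑ v, G.displacement x v = 0 := by
  simp [sum_displacement_eq_sum_boundary]

theorem sum_compl_displacement (L : Finset V) :
    ∑ v ∈ Lᶜ, G.displacement x v = -∑ v ∈ L, G.displacement x v := by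
  linarith [sum_add_sum_compl L (G.displacement x), G.sum_displacement_eq_zero x]

variable {G x}

theorem sub_le_sum_displacement_filter_le {u w : V} (huw : G.Adj u w) (hlt : x u < x w) :
    x w - x u ≤ ∑ v with x v ≤ x u, G.displacement x v := by
  set L : Finset V := {v | x v ≤ x u}
  have hcross : ∀ v ∈ L, ∀ t ∈ {t ∈ G.neighborFinset v | t ∉ L}, 0 ≤ x t - x v := by
    intro v hv t ht
    simp only [L, mem_filter, mem_univ, true_and, not_le] at hv ht
    linarith
  have hw : w ∈ {t ∈ G.neighborFinset u | t ∉ L} := by simp [L, huw, hlt]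
  have hu : u ∈ L := by simp [L]
  rw [sum_displacement_eq_sum_boundary]
  calc x w - x u ≤ ∑ t ∈ G.neighborFinset u with t ∉ L, (x t - x u) :=
        single_le_sum (hcross u hu) hw
    _ ≤ ∑ v ∈ L, ∑ t ∈ G.neighborFinset v with t ∉ L, (x t - x v) :=
        single_le_sum (fun v hv => sum_nonneg (hcross v hv)) hu

theorem two_mul_sub_le_sum_abs_displacement {u w : V} (huw : G.Adj u w) (hle : x u ≤ x w) :
    2 * (x w - x u) ≤ ∑ v, |G.displacement x v| := by
  rcases hle.eq_or_lt with heq | hlt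
  · simpa [heq] using sum_nonneg fun v _ => abs_nonneg (G.displacement x v)
  set L : Finset V := {v | x v ≤ x u}
  have hL := sub_le_sum_displacement_filter_le huw hlt
  calc 2 * (x w - x u)
      ≤ |∑ v ∈ L, G.displacement x v| + |∑ v ∈ Lᶜ, G.displacement x v| := by
        rw [sum_compl_displacement, abs_neg]
        linarith [le_abs_self (∑ v ∈ L, G.displacement x v)]
    _ ≤ ∑ v ∈ L, |G.displacement x v| + ∑ v ∈ Lᶜ, |G.displacement x v| :=
        add_le_add (abs_sum_le_sum_abs _ _) (abs_sum_le_sum_abs _ _)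
    _ = ∑ v, |G.displacement x v| := sum_add_sum_compl L _

theorem two_mul_abs_sub_le_sum_abs_displacement {u w : V} (huw : G.Adj u w) :
    2 * |x u - x w| ≤ ∑ v, |G.displacement x v| := by
  rcases le_total (x u) (x w) with h | h
  · rw [abs_sub_comm, abs_of_nonneg (sub_nonneg.mpr h)]
    exact two_mul_sub_le_sum_abs_displacement huw h
  · rw [abs_of_nonneg (sub_nonneg.mpr h)]
    exact two_mul_sub_le_sum_abs_displacement huw.symm h

end SimpleGraph

theorem summed_movement_ge_twice_longest_edge_general
    {V : Type*} [Fintype V] [DecidableEq V]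
    (G : SimpleGraph V) [DecidableRel G.Adj] (x : V → ℝ)
    (u w : V) (huw : G.Adj u w) :
    let N : V → Finset V := fun v => insert v (G.neighborFinset v)
    let m : V → ℝ := fun v => (∑ u ∈ N v, (x u - x v)) / ((N v).card : ℝ)
    ∑ v, ((N v).card : ℝ) * |m v| ≥ 2 * |x u - x w| := by
  intro N m
  have hm : ∀ v, ((N v).card : ℝ) * |m v| = |G.displacement x v| := fun v => by
    have hcard : (0 : ℝ) < (N v).card := by exact_mod_cast (insert_nonempty _ _).card_pos
    rw [abs_div, abs_of_pos hcard, mul_div_cancel₀ _ hcard.ne',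
      sum_insert (G.notMem_neighborFinset_self v), sub_self, zero_add, SimpleGraph.displacement]
  simpa only [hm] using SimpleGraph.two_mul_abs_sub_le_sum_abs_displacement huw

/-- In a 1-dimensional system, the total weighted movement
`∑_v |N(v)|·|m(v)|` is at least twice the length `λ = |x u − x w|` of a longest
influence edge `{u,w}`, where `N(v) = {v} ∪ neighbors of v` and
`m(v) = (∑_{u ∈ N(v)} (x u − x v))/|N(v)|`. -/
theorem summed_movement_ge_twice_longest_edge
    {V : Type*} [Fintype V] [DecidableEq V]
    (G : SimpleGraph V) [DecidableRel G.Adj] (x : V → ℝ)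
    (u w : V) (huw : G.Adj u w)
    (hmax : ∀ a b, G.Adj a b → |x a - x b| ≤ |x u - x w|) :
    let N : V → Finset V := fun v => insert v (G.neighborFinset v)
    let m : V → ℝ := fun v => (∑ u ∈ N v, (x u - x v)) / ((N v).card : ℝ)
    ∑ v, ((N v).card : ℝ) * |m v| ≥ 2 * |x u - x w| :=
  summed_movement_ge_twice_longest_edge_general G x u w huw
end

section
/- Let S_t be a state of a d-dimensional Hegselmann–Krause system with social network G = (V, E) and confidence bound ε, with potential Φ(S) = ∑_{{u,v} ∈ E} min{‖x_u - x_v‖₂², ε²}. If agent v is activated and moves by m(v) (the average displacement toward influencing neighbors N_t(v), where N_t(v) includes v itself), then Φ(S_t) − Φ(S_{t+1}) ≥ (|N_t(v)| + 1)·‖m(v)‖₂², with equality when the influence network does not change. -/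
open scoped Classical

/-- Influencing neighborhood of `v`: itself and its social-network neighbors at
distance at most `ε`. -/
noncomputable def hkNbhd {d : ℕ} {V : Type*} [Fintype V] [DecidableEq V]
    (G : SimpleGraph V) (ε : ℝ) (x : V → EuclideanSpace ℝ (Fin d)) (v : V) :
    Finset V :=
  insert v (Finset.univ.filter (fun u => G.Adj u v ∧ ‖x u - x v‖ ≤ ε))

/-- Movement of agent `v`: the average displacement toward its influencing
neighborhood. -/
noncomputable def hkMove {d : ℕ} {V : Type*} [Fintype V] [DecidableEq V]
    (G : SimpleGraph V) (ε : ℝ) (x : V → EuclideanSpace ℝ (Fin d)) (v : V) :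
    EuclideanSpace ℝ (Fin d) :=
  ((hkNbhd G ε x v).card : ℝ)⁻¹ • ∑ u ∈ hkNbhd G ε x v, (x u - x v)

/-- The HKS potential `Φ(x) = ∑_{{u,v} ∈ E} min{‖x u − x v‖², ε²}`. -/
noncomputable def hkPotential {d : ℕ} {V : Type*} [Fintype V] [DecidableEq V]
    (G : SimpleGraph V) (ε : ℝ) (x : V → EuclideanSpace ℝ (Fin d)) : ℝ :=
  ∑ e ∈ G.edgeFinset,
    Sym2.lift ⟨fun a b => min (‖x a - x b‖ ^ 2) (ε ^ 2),
      fun a b => by simp [norm_sub_rev (x a)]⟩ e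

section aux
open Finset

variable {d : ℕ} {V : Type*} [Fintype V] [DecidableEq V]

lemma hk_filter_eq_image (G : SimpleGraph V) (v : V) :
    G.edgeFinset.filter (fun e => v ∈ e) =
      (G.neighborFinset v).image (fun u => s(u, v)) := by
  ext e
  induction e using Sym2.ind with
  | _ a b =>
    simp only [Finset.mem_filter, SimpleGraph.mem_edgeFinset, Finset.mem_image,
      SimpleGraph.mem_neighborFinset, Sym2.mem_iff, SimpleGraph.mem_edgeSet]
    constructor
    · rintro ⟨hab, hv | hv⟩
      · subst hv; exact ⟨b, hab, Sym2.eq_swap⟩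
      · subst hv; exact ⟨a, hab.symm, rfl⟩
    · rintro ⟨u, hu, he⟩
      rw [Sym2.eq_iff] at he
      rcases he with ⟨rfl, rfl⟩ | ⟨rfl, rfl⟩
      · exact ⟨hu.symm, Or.inr rfl⟩
      · exact ⟨hu, Or.inl rfl⟩

/-- The potential difference after updating `v` is a sum over the neighbors of `v`. -/
lemma hkPotential_update_diff (G : SimpleGraph V) (ε : ℝ)
    (x : V → EuclideanSpace ℝ (Fin d)) (v : V) (m : EuclideanSpace ℝ (Fin d)) :
    hkPotential G ε x - hkPotential G ε (Function.update x v (x v + m)) =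
      ∑ u ∈ G.neighborFinset v,
        (min (‖x u - x v‖ ^ 2) (ε ^ 2) - min (‖x u - x v - m‖ ^ 2) (ε ^ 2)) := by
  classical
  set x' := Function.update x v (x v + m) with hx'
  unfold hkPotential
  rw [← Finset.sum_sub_distrib]
  rw [← Finset.sum_filter_of_ne (p := fun e => v ∈ e)]
  · rw [hk_filter_eq_image G v, Finset.sum_image]
    · apply Finset.sum_congr rfl
      intro u hu
      rw [SimpleGraph.mem_neighborFinset] at hu
      have huv : u ≠ v := fun h => G.irrefl (h ▸ hu)
      simp only [Sym2.lift_mk]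
      congr 2
      · rw [hx', Function.update_of_ne huv, Function.update_self, sub_add_eq_sub_sub]
    · intro a _ b _ hab
      rcases Sym2.eq_iff.mp hab with ⟨rfl, _⟩ | ⟨rfl, h⟩
      · rfl
      · exact h
  · intro e he hne
    by_contra hv
    apply hne
    induction e using Sym2.ind with
    | _ a b =>
      simp only [Sym2.mem_iff, not_or] at hv
      have ha : x' a = x a := Function.update_of_ne (fun h => hv.1 h.symm) _ _
      have hb : x' b = x b := Function.update_of_ne (fun h => hv.2 h.symm) _ _
      simp only [Sym2.lift_mk, ha, hb, sub_self]

end aux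

/-- Potential-drop lemma. If agent `v` is activated and moves by
`m(v)`, the potential drops by at least `(|N_t(v)| + 1)·‖m(v)‖²` (here `N_t(v)`
contains `v` itself), with equality when the influence network does not change. -/
theorem potential_drop_lower_bound
    {d : ℕ} {V : Type*} [Fintype V] [DecidableEq V]
    (G : SimpleGraph V) (ε : ℝ) (hε : 0 < ε)
    (x : V → EuclideanSpace ℝ (Fin d)) (v : V) :
    let m := hkMove G ε x v
    let x' := Function.update x v (x v + m)
    (hkPotential G ε x - hkPotential G ε x' ≥
        (((hkNbhd G ε x v).card : ℝ) + 1) * ‖m‖ ^ 2) ∧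
    ((∀ a b : V, (G.Adj a b ∧ ‖x a - x b‖ ≤ ε) ↔ (G.Adj a b ∧ ‖x' a - x' b‖ ≤ ε)) →
      hkPotential G ε x - hkPotential G ε x' =
        (((hkNbhd G ε x v).card : ℝ) + 1) * ‖m‖ ^ 2) := by
  intro m x'
  have hx' : x' = Function.update x v (x v + m) := rfl
  rw [hx']
  rw [hkPotential_update_diff G ε x v m]
  set A : Finset V := (G.neighborFinset v).filter (fun u => ‖x u - x v‖ ≤ ε) with hA
  set n : ℝ := ((hkNbhd G ε x v).card : ℝ) with hn
  have hA0 : hkNbhd G ε x v = insert v A := by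
    rw [hkNbhd, hA]
    congr 1
    ext u
    simp only [Finset.mem_filter, Finset.mem_univ, true_and, SimpleGraph.mem_neighborFinset]
    rw [G.adj_comm]
  have hvA : v ∉ A := by
    simp [hA, SimpleGraph.mem_neighborFinset, G.irrefl]
  have hcard : n = (A.card : ℝ) + 1 := by
    rw [hn, hA0, Finset.card_insert_of_notMem hvA]
    push_cast; ring
  have hnpos : 0 < n := by
    rw [hn]
    exact_mod_cast Finset.card_pos.2 ⟨v, by rw [hA0]; exact Finset.mem_insert_self _ _⟩
  have hS : ∑ u ∈ A, (x u - x v) = n • m := by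
    have h1 : ∑ u ∈ hkNbhd G ε x v, (x u - x v) = ∑ u ∈ A, (x u - x v) := by
      rw [hA0, Finset.sum_insert hvA, sub_self, zero_add]
    rw [← h1, hn]
    rw [show m = hkMove G ε x v from rfl, hkMove, smul_smul,
      mul_inv_cancel₀ hnpos.ne', one_smul]
  have hexact : ∑ u ∈ A, (‖x u - x v‖ ^ 2 - ‖x u - x v - m‖ ^ 2) = (n + 1) * ‖m‖ ^ 2 := by
    have hper : ∀ u ∈ A, ‖x u - x v‖ ^ 2 - ‖x u - x v - m‖ ^ 2 =
        2 * inner ℝ (x u - x v) m - ‖m‖ ^ 2 := by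
      intro u _
      have := norm_sub_sq_real (x u - x v) m
      linarith
    rw [Finset.sum_congr rfl hper, Finset.sum_sub_distrib, Finset.sum_const,
      ← Finset.mul_sum, ← sum_inner, hS, real_inner_smul_left,
      real_inner_self_eq_norm_sq, nsmul_eq_mul]
    have : (A.card : ℝ) = n - 1 := by linarith
    rw [this]
    ring
  rw [← Finset.sum_filter_add_sum_filter_not (G.neighborFinset v)
    (fun u => ‖x u - x v‖ ≤ ε), ← hA]
  constructor
  · have h1 : (n + 1) * ‖m‖ ^ 2 ≤
        ∑ u ∈ A, (min (‖x u - x v‖ ^ 2) (ε ^ 2) - min (‖x u - x v - m‖ ^ 2) (ε ^ 2)) := by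
      rw [← hexact]
      apply Finset.sum_le_sum
      intro u hu
      have hw : ‖x u - x v‖ ≤ ε := (Finset.mem_filter.mp hu).2
      rw [min_eq_left (pow_le_pow_left₀ (norm_nonneg _) hw 2)]
      exact sub_le_sub_left (min_le_left _ _) _
    have h2 : 0 ≤ ∑ u ∈ (G.neighborFinset v).filter (fun u => ¬ ‖x u - x v‖ ≤ ε),
        (min (‖x u - x v‖ ^ 2) (ε ^ 2) - min (‖x u - x v - m‖ ^ 2) (ε ^ 2)) := by
      apply Finset.sum_nonneg
      intro u hu
      have hw : ε ≤ ‖x u - x v‖ := le_of_lt (lt_of_not_ge (Finset.mem_filter.mp hu).2)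
      rw [min_eq_right (pow_le_pow_left₀ hε.le hw 2)]
      exact sub_nonneg.mpr (min_le_right _ _)
    linarith
  · intro h
    have hupd : ∀ u : V, u ≠ v → x' u - x' v = x u - x v - m := by
      intro u hu
      rw [hx', Function.update_of_ne hu, Function.update_self, sub_add_eq_sub_sub]
    have e1 : ∑ u ∈ A, (min (‖x u - x v‖ ^ 2) (ε ^ 2) - min (‖x u - x v - m‖ ^ 2) (ε ^ 2)) =
        (n + 1) * ‖m‖ ^ 2 := by
      rw [← hexact]
      apply Finset.sum_congr rfl
      intro u hu
      obtain ⟨hadj, hw⟩ := Finset.mem_filter.mp hu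
      rw [SimpleGraph.mem_neighborFinset] at hadj
      have hne : u ≠ v := fun h' => G.irrefl (h' ▸ hadj)
      have h2 := ((h u v).mp ⟨hadj.symm, hw⟩).2
      rw [hupd u hne] at h2
      rw [min_eq_left (pow_le_pow_left₀ (norm_nonneg _) hw 2),
        min_eq_left (pow_le_pow_left₀ (norm_nonneg _) h2 2)]
    have e2 : ∑ u ∈ (G.neighborFinset v).filter (fun u => ¬ ‖x u - x v‖ ≤ ε),
        (min (‖x u - x v‖ ^ 2) (ε ^ 2) - min (‖x u - x v - m‖ ^ 2) (ε ^ 2)) = 0 := by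
      apply Finset.sum_eq_zero
      intro u hu
      obtain ⟨hadj, hw⟩ := Finset.mem_filter.mp hu
      rw [SimpleGraph.mem_neighborFinset] at hadj
      have hne : u ≠ v := fun h' => G.irrefl (h' ▸ hadj)
      have hw' : ¬ ‖x u - x v - m‖ ≤ ε := by
        intro hle
        apply hw
        have := (h u v).mpr ⟨hadj.symm, by rw [hupd u hne]; exact hle⟩
        exact this.2
      rw [min_eq_right (pow_le_pow_left₀ hε.le (le_of_lt (lt_of_not_ge hw)) 2),
        min_eq_right (pow_le_pow_left₀ hε.le (le_of_lt (lt_of_not_ge hw')) 2)]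
      ring
    rw [e1, e2, add_zero]
end

section
/- Let C = (V_C, E_C) be a clique (complete graph) on a finite set of agents with positions x : V_C → ℝ in one dimension, N(v) = V_C for all v ∈ V_C, and m(v) = (∑_{u ∈ V_C} (x_u - x_v))/|V_C|. Let {u,w} be a longest edge with length λ. Then ∑_{v ∈ V_C} |m(v)| ≥ λ. -/
/-- In a clique of agents with 1-dimensional positions `x`, where
every agent's influencing neighborhood is the whole clique and
`m(v) = (∑_u (x u − x v))/|V_C|`, the total movement `∑_v |m(v)|` is at least the
length `λ = |x u − x w|` of a longest edge `{u,w}`. -/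
theorem clique_total_movement_ge_longest_edge
    {V : Type*} [Fintype V] (x : V → ℝ) (u w : V) (huw : u ≠ w)
    (hmax : ∀ a b : V, |x a - x b| ≤ |x u - x w|) :
    let m : V → ℝ := fun v => (∑ a, (x a - x v)) / (Fintype.card V : ℝ)
    ∑ v, |m v| ≥ |x u - x w| := by
  intro m
  classical
  have : Nonempty V := ⟨u⟩
  have hn : (0 : ℝ) < (Fintype.card V : ℝ) := by
    exact_mod_cast Fintype.card_pos
  have key : m u - m w = x w - x u := by
    show (∑ a, (x a - x u)) / _ - (∑ a, (x a - x w)) / _ = _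
    rw [div_sub_div_same, ← Finset.sum_sub_distrib]
    have : ∀ a : V, (x a - x u) - (x a - x w) = x w - x u := fun a => by ring
    simp only [this, Finset.sum_const, Finset.card_univ, nsmul_eq_mul]
    field_simp
  have h1 : |x u - x w| ≤ |m u| + |m w| := by
    calc |x u - x w| = |m u - m w| := by rw [key]; rw [abs_sub_comm]
      _ ≤ |m u| + |m w| := abs_sub _ _
  have h2 : |m u| + |m w| ≤ ∑ v, |m v| := by
    have : ∑ v ∈ ({u, w} : Finset V), |m v| ≤ ∑ v, |m v| :=
      Finset.sum_le_sum_of_subset_of_nonneg (Finset.subset_univ _)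
        (fun i _ _ => abs_nonneg _)
    rwa [Finset.sum_pair huw] at this
  linarith
end
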